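/- Let L ≥ 1 and let θ = (W_1,…,W_L) and θ' = (W'_1,…,W'_L) be parameters of two bias-free ReLU networks with the same architecture (L, (N_0,…,N_L)). Assume ‖W_ℓ‖_{op,∞} ≤ r_ℓ and ‖W'_ℓ‖_{op,∞} ≤ r_ℓ for every ℓ = 1,…,L, with r_ℓ > 0. Then for every D > 0, sup over x ∈ [−D,D]^{N_0} of ‖R_θ(x) − R_{θ'}(x)‖_∞ is at most D · (max_{l=1,…,L} ∏_{k=1, k≠l}^{L} r_k) · (Σ_{ℓ=1}^L N_{ℓ−1}) · ‖θ − θ'‖_∞. -/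
import Mathlib

open Finset

/-- The ℓ∞ operator norm of a real matrix: `sup_{‖x‖∞ = 1} ‖Ax‖∞`
(the norm on `n → ℝ` is the sup norm). -/
noncomputable def opNormInf {m n : Type*} [Fintype m] [Fintype n] (A : Matrix m n ℝ) : ℝ :=
  sSup ((fun x : n → ℝ => ‖A.mulVec x‖) '' {x | ‖x‖ = 1})

/-- Realization of a bias-free network: layer `ℓ` (0-indexed) has weight matrix
`W ℓ ∈ ℝ^{N (ℓ+1) × N ℓ}`, the activation `σ` is applied componentwise. -/
noncomputable def realize (σ : ℝ → ℝ) (N : ℕ → ℕ)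
    (W : ∀ ℓ : ℕ, Matrix (Fin (N (ℓ + 1))) (Fin (N ℓ)) ℝ) :
    (L : ℕ) → (Fin (N 0) → ℝ) → Fin (N L) → ℝ
  | 0, x => x
  | L + 1, x => fun i => σ ((W L).mulVec (realize σ N W L x) i)

/-- `‖θ - θ'‖∞`: the maximum over the first `L` layers and all entries of the absolute
entrywise difference of the parameters. -/
noncomputable def paramDist (N : ℕ → ℕ) (L : ℕ)
    (W W' : ∀ ℓ : ℕ, Matrix (Fin (N (ℓ + 1))) (Fin (N ℓ)) ℝ) : ℝ :=
  sSup {c : ℝ | ∃ ℓ < L, ∃ i j, c = |W ℓ i j - W' ℓ i j|}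

/-! ### Auxiliary lemmas -/

lemma mulVec_norm_le {m n : ℕ} (A : Matrix (Fin m) (Fin n) ℝ) (v : Fin n → ℝ) :
    ‖A.mulVec v‖ ≤ opNormInf A * ‖v‖ := by
  have hbdd : BddAbove ((fun x : Fin n → ℝ => ‖A.mulVec x‖) '' {x | ‖x‖ = 1}) := by
    refine ⟨∑ i, ∑ j, |A i j|, ?_⟩
    rintro y ⟨w, hw, rfl⟩
    have hC : (0:ℝ) ≤ ∑ i, ∑ j, |A i j| :=
      Finset.sum_nonneg fun i _ => Finset.sum_nonneg fun j _ => abs_nonneg _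
    rw [pi_norm_le_iff_of_nonneg hC]
    intro i
    have h1 : ‖A.mulVec w i‖ ≤ ∑ j, |A i j| := by
      simp only [Matrix.mulVec, dotProduct, Real.norm_eq_abs]
      calc |∑ j, A i j * w j| ≤ ∑ j, |A i j * w j| := Finset.abs_sum_le_sum_abs _ _
        _ ≤ ∑ j, |A i j| := by
            apply Finset.sum_le_sum
            intro j _
            rw [abs_mul]
            have h2 : |w j| ≤ 1 := by
              have hw1 : ‖w‖ = 1 := hw
              have := norm_le_pi_norm w j
              rw [Real.norm_eq_abs] at this
              simpa [hw1] using this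
            nlinarith [abs_nonneg (A i j)]
    exact h1.trans (Finset.single_le_sum (f := fun i => ∑ j, |A i j|)
      (fun i _ => Finset.sum_nonneg fun j _ => abs_nonneg _) (Finset.mem_univ i))
  rcases eq_or_ne v 0 with rfl | hv
  · simp [Matrix.mulVec_zero]
  · have hv' : 0 < ‖v‖ := norm_pos_iff.mpr hv
    have hu : ‖(‖v‖⁻¹ • v)‖ = 1 := norm_smul_inv_norm hv
    have hle : ‖A.mulVec (‖v‖⁻¹ • v)‖ ≤ opNormInf A := le_csSup hbdd ⟨_, hu, rfl⟩
    rw [Matrix.mulVec_smul, norm_smul, Real.norm_eq_abs, abs_inv, abs_norm] at hle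
    calc ‖A.mulVec v‖ = (‖v‖⁻¹ * ‖A.mulVec v‖) * ‖v‖ := by field_simp
      _ ≤ opNormInf A * ‖v‖ := by nlinarith

lemma paramDist_nonneg (N : ℕ → ℕ) (L : ℕ)
    (W W' : ∀ ℓ : ℕ, Matrix (Fin (N (ℓ + 1))) (Fin (N ℓ)) ℝ) :
    0 ≤ paramDist N L W W' := by
  apply Real.sSup_nonneg
  rintro c ⟨ℓ, _, i, j, rfl⟩
  exact abs_nonneg _

lemma entry_le_paramDist {N : ℕ → ℕ} {L ℓ : ℕ} (hℓ : ℓ < L)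
    (W W' : ∀ ℓ : ℕ, Matrix (Fin (N (ℓ + 1))) (Fin (N ℓ)) ℝ)
    (i : Fin (N (ℓ+1))) (j : Fin (N ℓ)) :
    |W ℓ i j - W' ℓ i j| ≤ paramDist N L W W' := by
  apply le_csSup
  · refine ⟨∑ l ∈ range L, ∑ i', ∑ j', |W l i' j' - W' l i' j'|, ?_⟩
    rintro c ⟨l, hl, i', j', rfl⟩
    have h1 : |W l i' j' - W' l i' j'| ≤ ∑ i'', ∑ j'', |W l i'' j'' - W' l i'' j''| := by
      refine le_trans ?_ (Finset.single_le_sum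
        (f := fun i'' : Fin (N (l+1)) => ∑ j'' : Fin (N l), |W l i'' j'' - W' l i'' j''|)
        (fun a _ => Finset.sum_nonneg fun b _ => abs_nonneg _) (Finset.mem_univ i'))
      exact Finset.single_le_sum
        (f := fun j'' : Fin (N l) => |W l i' j'' - W' l i' j''|)
        (fun b _ => abs_nonneg _) (Finset.mem_univ j')
    exact h1.trans (Finset.single_le_sum
      (f := fun l => ∑ i'' : Fin (N (l+1)), ∑ j'' : Fin (N l), |W l i'' j'' - W' l i'' j''|)
      (fun a _ => Finset.sum_nonneg fun _ _ => Finset.sum_nonneg fun _ _ => abs_nonneg _)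
      (Finset.mem_range.mpr hl))
  · exact ⟨ℓ, hℓ, i, j, rfl⟩

lemma relu_lip (a b : ℝ) : |max 0 a - max 0 b| ≤ |a - b| := by
  rw [max_comm 0 a, max_comm 0 b]
  exact abs_max_sub_max_le_abs a b 0

lemma relu_comp_sub_norm_le {n : ℕ} (z w : Fin n → ℝ) :
    ‖(fun i => max 0 (z i)) - (fun i => max 0 (w i))‖ ≤ ‖z - w‖ := by
  rw [pi_norm_le_iff_of_nonneg (norm_nonneg _)]
  intro i
  simp only [Pi.sub_apply, Real.norm_eq_abs]
  refine (relu_lip _ _).trans ?_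
  simpa [Real.norm_eq_abs] using norm_le_pi_norm (z - w) i

lemma relu_comp_norm_le {n : ℕ} (z : Fin n → ℝ) :
    ‖(fun i => max 0 (z i))‖ ≤ ‖z‖ := by
  rw [pi_norm_le_iff_of_nonneg (norm_nonneg _)]
  intro i
  simp only [Real.norm_eq_abs]
  rw [abs_of_nonneg (le_max_left _ _)]
  refine max_le (norm_nonneg z) ?_
  exact (le_abs_self _).trans (by simpa [Real.norm_eq_abs] using norm_le_pi_norm z i)

lemma diff_mulVec_le {m n : ℕ} (A B : Matrix (Fin m) (Fin n) ℝ) (v : Fin n → ℝ) (ε : ℝ)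
    (hε : 0 ≤ ε) (h : ∀ i j, |A i j - B i j| ≤ ε) :
    ‖A.mulVec v - B.mulVec v‖ ≤ (n : ℝ) * ε * ‖v‖ := by
  have hnn : 0 ≤ (n:ℝ) * ε * ‖v‖ := by positivity
  rw [pi_norm_le_iff_of_nonneg hnn]
  intro i
  simp only [Pi.sub_apply, Matrix.mulVec, dotProduct, Real.norm_eq_abs]
  rw [← Finset.sum_sub_distrib]
  calc |∑ j, (A i j * v j - B i j * v j)| ≤ ∑ j, |A i j * v j - B i j * v j| :=
        Finset.abs_sum_le_sum_abs _ _
    _ ≤ ∑ _j : Fin n, ε * ‖v‖ := by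
        apply Finset.sum_le_sum
        intro j _
        rw [← sub_mul, abs_mul]
        have h2 : |v j| ≤ ‖v‖ := by simpa [Real.norm_eq_abs] using norm_le_pi_norm v j
        exact mul_le_mul (h i j) h2 (abs_nonneg _) hε
    _ = (n : ℝ) * ε * ‖v‖ := by
        simp [Finset.sum_const, nsmul_eq_mul, mul_assoc]

lemma realize_norm_le (L : ℕ) (N : ℕ → ℕ)
    (V : ∀ ℓ : ℕ, Matrix (Fin (N (ℓ + 1))) (Fin (N ℓ)) ℝ) (r : ℕ → ℝ)
    (hr : ∀ ℓ < L, 0 ≤ r ℓ) (hV : ∀ ℓ < L, opNormInf (V ℓ) ≤ r ℓ)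
    (D : ℝ) (hD : 0 ≤ D) (x : Fin (N 0) → ℝ) (hx : ‖x‖ ≤ D) :
    ∀ ℓ ≤ L, ‖realize (fun t => max 0 t) N V ℓ x‖ ≤ D * ∏ j ∈ range ℓ, r j := by
  intro ℓ
  induction ℓ with
  | zero => intro _; simpa [realize] using hx
  | succ ℓ ih =>
    intro hℓ
    have hℓL : ℓ < L := hℓ
    have ihℓ := ih (le_of_lt hℓ)
    have h1 : realize (fun t => max 0 t) N V (ℓ+1) x
        = fun i => max 0 ((V ℓ).mulVec (realize (fun t => max 0 t) N V ℓ x) i) := rfl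
    rw [h1]
    calc ‖fun i => max 0 ((V ℓ).mulVec (realize (fun t => max 0 t) N V ℓ x) i)‖
        ≤ ‖(V ℓ).mulVec (realize (fun t => max 0 t) N V ℓ x)‖ := relu_comp_norm_le _
      _ ≤ opNormInf (V ℓ) * ‖realize (fun t => max 0 t) N V ℓ x‖ := mulVec_norm_le _ _
      _ ≤ r ℓ * (D * ∏ j ∈ range ℓ, r j) :=
          mul_le_mul (hV ℓ hℓL) ihℓ (norm_nonneg _) (hr ℓ hℓL)
      _ = D * ∏ j ∈ range (ℓ+1), r j := by
          rw [Finset.prod_range_succ]; ring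

/-- bias-free ReLU networks with layerwise operator norm bounds `r ℓ > 0`
(0-based indexing of the layers): for every `x ∈ [-D,D]^{N 0}`,
`‖R_θ(x) - R_{θ'}(x)‖∞ ≤ D · (max_{l=1,…,L} ∏_{k=1,k≠l}^L r_k) · (Σ_{ℓ=1}^L N_{ℓ-1}) · ‖θ - θ'‖∞`. -/
theorem statement2 (L : ℕ) (hL : 1 ≤ L) (N : ℕ → ℕ)
    (W W' : ∀ ℓ : ℕ, Matrix (Fin (N (ℓ + 1))) (Fin (N ℓ)) ℝ)
    (r : ℕ → ℝ) (hr : ∀ ℓ < L, 0 < r ℓ)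
    (hW : ∀ ℓ < L, opNormInf (W ℓ) ≤ r ℓ)
    (hW' : ∀ ℓ < L, opNormInf (W' ℓ) ≤ r ℓ)
    (D : ℝ) (hD : 0 < D) (x : Fin (N 0) → ℝ) (hx : ∀ i, |x i| ≤ D) :
    ‖realize (fun t => max 0 t) N W L x - realize (fun t => max 0 t) N W' L x‖ ≤
      D * ((Finset.range L).sup' (Finset.nonempty_range_iff.mpr (by omega))
          (fun l => ∏ k ∈ (Finset.range L).erase l, r k)) *
        (∑ ℓ ∈ Finset.range L, (N ℓ : ℝ)) *
        paramDist N L W W' := by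
  set ε := paramDist N L W W' with hεdef
  have hε : 0 ≤ ε := paramDist_nonneg N L W W'
  have hxn : ‖x‖ ≤ D := by
    rw [pi_norm_le_iff_of_nonneg hD.le]
    intro i; simpa [Real.norm_eq_abs] using hx i
  have hr' : ∀ ℓ < L, 0 ≤ r ℓ := fun ℓ h => (hr ℓ h).le
  have hy' := realize_norm_le L N W' r hr' hW' D hD.le x hxn
  -- main induction
  have main : ∀ ℓ ≤ L,
      ‖realize (fun t => max 0 t) N W ℓ x - realize (fun t => max 0 t) N W' ℓ x‖ ≤
        D * ε * ∑ k ∈ range ℓ, (N k : ℝ) * ∏ j ∈ (range ℓ).erase k, r j := by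
    intro ℓ
    induction ℓ with
    | zero => intro _; simp [realize]
    | succ ℓ ih =>
      intro hℓ
      have hℓL : ℓ < L := hℓ
      have ihℓ := ih (le_of_lt hℓ)
      set y := realize (fun t => max 0 t) N W ℓ x with hy
      set y' := realize (fun t => max 0 t) N W' ℓ x with hy'def
      have h1 : realize (fun t => max 0 t) N W (ℓ+1) x -
          realize (fun t => max 0 t) N W' (ℓ+1) x
          = (fun i => max 0 ((W ℓ).mulVec y i)) - (fun i => max 0 ((W' ℓ).mulVec y' i)) := rfl
      rw [h1]
      have h2 : ‖(fun i => max 0 ((W ℓ).mulVec y i)) - (fun i => max 0 ((W' ℓ).mulVec y' i))‖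
          ≤ ‖(W ℓ).mulVec y - (W' ℓ).mulVec y'‖ := relu_comp_sub_norm_le _ _
      have h3 : (W ℓ).mulVec y - (W' ℓ).mulVec y'
          = ((W ℓ).mulVec y - (W ℓ).mulVec y') + ((W ℓ).mulVec y' - (W' ℓ).mulVec y') := by
        abel
      have h4 : ‖(W ℓ).mulVec y - (W ℓ).mulVec y'‖ ≤ r ℓ * (D * ε *
          ∑ k ∈ range ℓ, (N k : ℝ) * ∏ j ∈ (range ℓ).erase k, r j) := by
        rw [← Matrix.mulVec_sub]
        refine (mulVec_norm_le _ _).trans ?_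
        exact mul_le_mul (hW ℓ hℓL) ihℓ (norm_nonneg _) (hr' ℓ hℓL)
      have h5 : ‖(W ℓ).mulVec y' - (W' ℓ).mulVec y'‖ ≤
          (N ℓ : ℝ) * ε * (D * ∏ j ∈ range ℓ, r j) := by
        have hd := diff_mulVec_le (W ℓ) (W' ℓ) y' ε hε
          (fun i j => entry_le_paramDist hℓL W W' i j)
        refine hd.trans ?_
        apply mul_le_mul_of_nonneg_left (hy' ℓ (le_of_lt hℓ)) (by positivity)
      have hB : ∑ k ∈ range (ℓ+1), (N k:ℝ) * ∏ j ∈ (range (ℓ+1)).erase k, r j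
          = r ℓ * (∑ k ∈ range ℓ, (N k:ℝ) * ∏ j ∈ (range ℓ).erase k, r j)
            + (N ℓ:ℝ) * ∏ j ∈ range ℓ, r j := by
        rw [Finset.sum_range_succ]
        congr 1
        · rw [Finset.mul_sum]
          apply Finset.sum_congr rfl
          intro k hk
          have hk' : ℓ ≠ k := fun h => absurd hk (by simp [← h])
          rw [Finset.range_add_one, Finset.erase_insert_of_ne hk',
            Finset.prod_insert (by simp [Finset.mem_erase])]
          ring
        · rw [Finset.range_add_one, Finset.erase_insert (by simp)]
      calc ‖(fun i => max 0 ((W ℓ).mulVec y i)) - (fun i => max 0 ((W' ℓ).mulVec y' i))‖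
          ≤ ‖(W ℓ).mulVec y - (W' ℓ).mulVec y'‖ := h2
        _ ≤ ‖(W ℓ).mulVec y - (W ℓ).mulVec y'‖ + ‖(W ℓ).mulVec y' - (W' ℓ).mulVec y'‖ := by
            rw [h3]; exact norm_add_le _ _
        _ ≤ r ℓ * (D * ε * ∑ k ∈ range ℓ, (N k : ℝ) * ∏ j ∈ (range ℓ).erase k, r j)
            + (N ℓ : ℝ) * ε * (D * ∏ j ∈ range ℓ, r j) := add_le_add h4 h5
        _ = D * ε * ∑ k ∈ range (ℓ+1), (N k:ℝ) * ∏ j ∈ (range (ℓ+1)).erase k, r j := by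
            rw [hB]; ring
  have hmain := main L le_rfl
  set M := (Finset.range L).sup' (Finset.nonempty_range_iff.mpr (by omega))
    (fun l => ∏ k ∈ (Finset.range L).erase l, r k) with hM
  have hBM : ∑ k ∈ range L, (N k : ℝ) * ∏ j ∈ (range L).erase k, r j
      ≤ (∑ ℓ ∈ range L, (N ℓ : ℝ)) * M := by
    rw [Finset.sum_mul]
    apply Finset.sum_le_sum
    intro k hk
    have hkM : ∏ j ∈ (range L).erase k, r j ≤ M := by
      rw [hM]
      exact Finset.le_sup' (fun l => ∏ k ∈ (Finset.range L).erase l, r k) hk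
    exact mul_le_mul_of_nonneg_left hkM (Nat.cast_nonneg _)
  calc ‖realize (fun t => max 0 t) N W L x - realize (fun t => max 0 t) N W' L x‖
      ≤ D * ε * ∑ k ∈ range L, (N k : ℝ) * ∏ j ∈ (range L).erase k, r j := hmain
    _ ≤ D * ε * ((∑ ℓ ∈ range L, (N ℓ : ℝ)) * M) :=
        mul_le_mul_of_nonneg_left hBM (by positivity)
    _ = D * M * (∑ ℓ ∈ range L, (N ℓ : ℝ)) * ε := by ring
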